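/- Let ι be a finite nonempty index set and 𝒳 a type of records, and model datasets as functions D : ι → 𝒳. Let d ≥ 1, let f : (ι → 𝒳) → (Fin d → ℝ) be a vector-valued query, let ε > 0 and Δ > 0, and assume the L1-sensitivity bound ∑_{k=0}^{d−1} |f(D)_k − f(D′)_k| ≤ Δ for all neighbouring datasets D, D′. For each dataset D, let μ_D be the product probability measure on Fin d → ℝ whose k-th factor has density x ↦ (ε/(2Δ))·exp(−ε·|x − f(D)_k|/Δ) with respect to Lebesgue measure (i.e., independent Lap(Δ/ε) noise is added to each coordinate of f(D)). Then this mechanism satisfies ε-differential privacy: for all neighbouring datasets D, D′ and every measurable set S ⊆ (Fin d → ℝ), μ_D(S) ≤ exp(ε)·μ_{D′}(S). -/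

import Mathlib

/-!
Each coordinate of the mechanism is a Laplace measure, whose density at location `a` is at most
`exp (ε |a - b| / Δ)` times its density at location `b`, by the triangle inequality
`|x - b| ≤ |x - a| + |a - b|`. Such a bound between densities is a bound between the measures,
and it survives taking products: the product measures differ by at most the factor
`exp (ε ‖f D - f D'‖₁ / Δ) ≤ exp ε`.
-/

open MeasureTheory

/-- Two datasets are neighbouring if they differ at exactly one index. -/
def Neighbouring {ι 𝒳 : Type*} (D D' : ι → 𝒳) : Prop :=
  ∃ i, D i ≠ D' i ∧ ∀ j, j ≠ i → D j = D' j

/-- The vector-valued Laplace mechanism: independent `Lap(Δ/ε)` noise is added to every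
coordinate of `f D`, i.e. the product measure on `Fin d → ℝ` whose `k`-th factor has
density `x ↦ (ε/(2Δ)) · exp (-ε·|x - (f D) k|/Δ)` with respect to Lebesgue measure. -/
noncomputable def laplaceMechanismVec {ι 𝒳 : Type*} (d : ℕ)
    (f : (ι → 𝒳) → (Fin d → ℝ)) (ε Δ : ℝ) (D : ι → 𝒳) : Measure (Fin d → ℝ) :=
  Measure.pi fun k =>
    volume.withDensity fun x =>
      ENNReal.ofReal ((ε / (2 * Δ)) * Real.exp (-(ε * |x - f D k|) / Δ))

open Real
open scoped ENNReal NNReal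

namespace MeasureTheory

namespace Measure

variable {ι : Type*} [Fintype ι] {α : ι → Type*} [∀ i, MeasurableSpace (α i)]

theorem pi_mono {μ ν : ∀ i, Measure (α i)} (h : ∀ i, μ i ≤ ν i) :
    Measure.pi μ ≤ Measure.pi ν := by
  refine le_iff.2 fun s hs => ?_
  simp only [pi_def, toMeasure_apply _ _ hs]
  refine OuterMeasure.le_pi.2 (fun t _ => ?_) s
  exact (OuterMeasure.pi_pi_le _ t).trans (Finset.prod_le_prod' fun i _ => h i (t i))

theorem pi_smul (ν : ∀ i, Measure (α i)) [∀ i, SigmaFinite (ν i)] (c : ι → ℝ≥0) :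
    Measure.pi (fun i => c i • ν i) = (∏ i, c i) • Measure.pi ν :=
  pi_eq fun s _ => by
    simp only [smul_apply, pi_pi, ENNReal.smul_def, smul_eq_mul, ENNReal.ofNNReal_finsetProd,
      Finset.prod_mul_distrib]

end Measure

theorem withDensity_le_smul_withDensity {α : Type*} [MeasurableSpace α] {μ : Measure α}
    {f g : α → ℝ≥0∞} {c : ℝ≥0} (h : ∀ x, f x ≤ c * g x) :
    μ.withDensity f ≤ c • μ.withDensity g := by
  refine Measure.le_iff.2 fun s hs => ?_
  rw [Measure.smul_apply, ENNReal.smul_def, smul_eq_mul, withDensity_apply _ hs,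
    withDensity_apply _ hs, ← lintegral_const_mul' _ _ ENNReal.coe_ne_top]
  exact lintegral_mono h

end MeasureTheory

noncomputable def laplaceMeasure (ε Δ a : ℝ) : Measure ℝ :=
  volume.withDensity fun x => ENNReal.ofReal ((ε / (2 * Δ)) * exp (-(ε * |x - a|) / Δ))

instance (ε Δ a : ℝ) : SigmaFinite (laplaceMeasure ε Δ a) :=
  SigmaFinite.withDensity_of_ne_top (ae_of_all _ fun _ => ENNReal.ofReal_ne_top)

section Laplace

variable {ε Δ : ℝ}

theorem exp_neg_mul_abs_sub_div_le (hε : 0 ≤ ε) (hΔ : 0 ≤ Δ) (x a b : ℝ) :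
    exp (-(ε * |x - a|) / Δ) ≤ exp (ε * |a - b| / Δ) * exp (-(ε * |x - b|) / Δ) := by
  rw [← exp_add, exp_le_exp, ← add_div]
  gcongr ?_ / Δ
  linarith [mul_le_mul_of_nonneg_left (abs_sub_le x a b) hε]

theorem laplaceMeasure_le_smul (hε : 0 ≤ ε) (hΔ : 0 ≤ Δ) (a b : ℝ) :
    laplaceMeasure ε Δ a ≤ (exp (ε * |a - b| / Δ)).toNNReal • laplaceMeasure ε Δ b := by
  refine withDensity_le_smul_withDensity fun x => ?_
  rw [← ENNReal.ofReal.eq_def, ← ENNReal.ofReal_mul (exp_pos _).le]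
  refine ENNReal.ofReal_le_ofReal ?_
  rw [mul_left_comm]
  exact mul_le_mul_of_nonneg_left (exp_neg_mul_abs_sub_div_le hε hΔ x a b) (by positivity)

theorem pi_laplaceMeasure_le_smul {ι : Type*} [Fintype ι] (hε : 0 ≤ ε) (hΔ : 0 ≤ Δ)
    (a b : ι → ℝ) :
    Measure.pi (fun k => laplaceMeasure ε Δ (a k)) ≤
      (exp (ε * (∑ k, |a k - b k|) / Δ)).toNNReal •
        Measure.pi (fun k => laplaceMeasure ε Δ (b k)) := by
  have hprod : (exp (ε * (∑ k, |a k - b k|) / Δ)).toNNReal =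
      ∏ k, (exp (ε * |a k - b k| / Δ)).toNNReal := by
    rw [← Real.toNNReal_prod_of_nonneg fun k _ => (exp_pos _).le, ← exp_sum, Finset.mul_sum,
      Finset.sum_div]
  rw [hprod, ← Measure.pi_smul]
  exact Measure.pi_mono fun k => laplaceMeasure_le_smul hε hΔ (a k) (b k)

end Laplace

theorem laplaceMechanismVec_dp_general {ι 𝒳 : Type*}
    (d : ℕ) (f : (ι → 𝒳) → (Fin d → ℝ)) (ε Δ : ℝ)
    (hε : 0 < ε) (hΔ : 0 < Δ)
    (hsens : ∀ D D' : ι → 𝒳, Neighbouring D D' →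
      (∑ k : Fin d, |f D k - f D' k|) ≤ Δ) :
    ∀ D D' : ι → 𝒳, Neighbouring D D' → ∀ S : Set (Fin d → ℝ), MeasurableSet S →
      laplaceMechanismVec d f ε Δ D S ≤
        ENNReal.ofReal (Real.exp ε) * laplaceMechanismVec d f ε Δ D' S := by
  intro D D' hN S _
  have hloss : ε * (∑ k, |f D k - f D' k|) / Δ ≤ ε := by
    rw [div_le_iff₀ hΔ]
    exact mul_le_mul_of_nonneg_left (hsens D D' hN) hε.le
  -- `laplaceMechanismVec d f ε Δ D` unfolds to `Measure.pi fun k => laplaceMeasure ε Δ (f D k)`,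
  -- and `ENNReal.ofReal r` to `↑r.toNNReal`.
  calc laplaceMechanismVec d f ε Δ D S
      ≤ ENNReal.ofReal (exp (ε * (∑ k, |f D k - f D' k|) / Δ)) *
          laplaceMechanismVec d f ε Δ D' S :=
        pi_laplaceMeasure_le_smul hε.le hΔ.le (f D) (f D') S
    _ ≤ ENNReal.ofReal (exp ε) * laplaceMechanismVec d f ε Δ D' S := by gcongr

/-- The vector-valued Laplace mechanism satisfies `ε`-differential privacy: if the query
`f` has L1-sensitivity at most `Δ` over neighbouring datasets, then for all neighbouring
`D, D'` and every measurable `S ⊆ (Fin d → ℝ)`, `μ_D(S) ≤ exp ε · μ_{D'}(S)`. -/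
theorem laplaceMechanismVec_dp {ι 𝒳 : Type*} [Fintype ι] [Nonempty ι]
    (d : ℕ) (hd : 1 ≤ d) (f : (ι → 𝒳) → (Fin d → ℝ)) (ε Δ : ℝ)
    (hε : 0 < ε) (hΔ : 0 < Δ)
    (hsens : ∀ D D' : ι → 𝒳, Neighbouring D D' →
      (∑ k : Fin d, |f D k - f D' k|) ≤ Δ) :
    ∀ D D' : ι → 𝒳, Neighbouring D D' → ∀ S : Set (Fin d → ℝ), MeasurableSet S →
      laplaceMechanismVec d f ε Δ D S ≤
        ENNReal.ofReal (Real.exp ε) * laplaceMechanismVec d f ε Δ D' S :=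
  laplaceMechanismVec_dp_general d f ε Δ hε hΔ hsens
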